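/- arXiv:1208.0140 — 3 statements merged into one kernel-verified Lean document; each statement's English description precedes it below -/
import Mathlib

section
/- For every integer n ≥ 2, the identity ∑_{i=2}^{n} (3^{n+1-i} - 2^{n+1-i}) + ∑_{1<i<j≤n+1} 3^{i-2}·2^{j-i-1} + ∑_{i=2}^{n+1} 2^{i-2} = 3^n - 2^n holds. -/
/-!
Type I and type II vertices are equinumerous: reflecting the first sum and exchanging the order
of summation in the second (the inner sum over `i` being the geometric sum
`∑ 3 ^ a * 2 ^ b` over `a + b = k - 1`, i.e. `3 ^ k - 2 ^ k`) turns both into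
`∑_{k < n} (3 ^ k - 2 ^ k)`, while type III gives `∑_{k < n} 2 ^ k`. The identity then telescopes
along `3 ^ (k + 1) - 2 ^ (k + 1) = 3 * (3 ^ k - 2 ^ k) + 2 ^ k`.
-/

open Finset

lemma sum_range_succ_pow_mul_pow (y k : ℕ) :
    ∑ i ∈ range k, (y + 1) ^ i * y ^ (k - 1 - i) = (y + 1) ^ k - y ^ k := by
  simpa using geom_sum₂_mul_of_ge (Nat.le_succ y) k

lemma sum_Icc_two_eq_sum_range {M : Type*} [AddCommMonoid M] (g : ℕ → M) (n : ℕ) :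
    ∑ i ∈ Icc 2 (n + 1), g i = ∑ k ∈ range n, g (k + 2) := by
  rw [← Ico_add_one_right_eq_Icc, sum_Ico_eq_sum_range, show n + 1 + 1 - 2 = n by omega]
  simp_rw [add_comm 2]

lemma sum_Icc_two_reflect {M : Type*} [AddCommMonoid M] (g : ℕ → M) (hg : g 0 = 0) (n : ℕ) :
    ∑ i ∈ Icc 2 n, g (n + 1 - i) = ∑ k ∈ range n, g k := by
  rw [← Ico_add_one_right_eq_Icc, sum_Ico_reflect g 2 (Nat.le_succ _),
    show n + 1 + 1 - (n + 1) = 1 by omega, show n + 1 + 1 - 2 = n by omega]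
  refine sum_subset (fun k hk => by simp only [mem_Ico, mem_range] at *; omega) fun k hk hk' => ?_
  obtain rfl : k = 0 := by simp only [mem_Ico, mem_range] at hk hk'; omega
  exact hg

lemma sum_Icc_sum_Icc_three_pow_mul_two_pow (n : ℕ) :
    ∑ i ∈ Icc 2 n, ∑ j ∈ Icc (i + 1) (n + 1), 3 ^ (i - 2) * 2 ^ (j - i - 1)
      = ∑ k ∈ range n, (3 ^ k - 2 ^ k) := by
  rw [sum_comm' (t' := Icc 2 (n + 1)) (s' := fun j => Icc 2 (j - 1))
    (fun i j => by simp only [mem_Icc]; omega), sum_Icc_two_eq_sum_range]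
  refine sum_congr rfl fun k _ => ?_
  rw [show k + 2 - 1 = k + 1 by omega, sum_Icc_two_eq_sum_range,
    ← sum_range_succ_pow_mul_pow 2 k]
  refine sum_congr rfl fun i _ => ?_
  congr 2
  omega

lemma two_mul_sum_range_pow_sub_pow_add_sum_range_pow (n : ℕ) :
    2 * ∑ k ∈ range n, (3 ^ k - 2 ^ k) + ∑ k ∈ range n, 2 ^ k = 3 ^ n - 2 ^ n := by
  induction n with
  | zero => simp
  | succ n ih =>
    have h : 2 ^ n ≤ 3 ^ n := Nat.pow_le_pow_left (by norm_num) n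
    rw [sum_range_succ, sum_range_succ, pow_succ, pow_succ]
    omega

theorem stmt0_general (n : ℕ) :
    (∑ i ∈ Finset.Icc 2 n, (3 ^ (n + 1 - i) - 2 ^ (n + 1 - i)))
      + (∑ i ∈ Finset.Icc 2 n, ∑ j ∈ Finset.Icc (i + 1) (n + 1),
          3 ^ (i - 2) * 2 ^ (j - i - 1))
      + (∑ i ∈ Finset.Icc 2 (n + 1), 2 ^ (i - 2))
    = 3 ^ n - 2 ^ n := by
  have type_one := sum_Icc_two_reflect (fun k => 3 ^ k - 2 ^ k) (by simp) n
  rw [type_one, sum_Icc_sum_Icc_three_pow_mul_two_pow, sum_Icc_two_eq_sum_range, ← two_mul]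
  simpa using two_mul_sum_range_pow_sub_pow_add_sum_range_pow n

theorem stmt0 (n : ℕ) (hn : 2 ≤ n) :
    (∑ i ∈ Finset.Icc 2 n, (3 ^ (n + 1 - i) - 2 ^ (n + 1 - i)))
      + (∑ i ∈ Finset.Icc 2 n, ∑ j ∈ Finset.Icc (i + 1) (n + 1),
          3 ^ (i - 2) * 2 ^ (j - i - 1))
      + (∑ i ∈ Finset.Icc 2 (n + 1), 2 ^ (i - 2))
    = 3 ^ n - 2 ^ n :=
  stmt0_general n
end

section
/- The number of bipartite noncrossing trees with ℓ ordered left vertices and r ordered right vertices (ℓ, r ≥ 1) equals the binomial coefficient C(ℓ+r-2, ℓ-1), i.e., it equals the number of weak compositions of ℓ-1 into r parts. -/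
/-- The simple graph on `Fin ℓ ⊕ Fin r` whose edges are the pairs in `E`,
each pair `(p, q)` giving an edge between left vertex `p` and right vertex `q`. -/
def bipartiteGraph (ℓ r : ℕ) (E : Finset (Fin ℓ × Fin r)) :
    SimpleGraph (Fin ℓ ⊕ Fin r) :=
  SimpleGraph.fromEdgeSet ((fun p : Fin ℓ × Fin r => s(Sum.inl p.1, Sum.inr p.2)) '' ↑E)

/-!
A noncrossing tree is recorded by the degrees of its right vertices minus one, a weak
composition `b` of `ℓ - 1` into `r` parts (a tree has `ℓ + r - 1` edges). Conversely `b` gives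
the staircase in which right vertex `q` is joined to the left vertices from `b₀ + ⋯ + b_{q-1}`
to `b₀ + ⋯ + b_q`; it is connected with `ℓ + r - 1` edges, hence a tree, and noncrossing.
In a noncrossing tree every neighbourhood of a right vertex is an interval, and the largest
neighbour of `q` is also a neighbour of `q + 1`, so by induction on `q` the tree is the
staircase of its degree sequence. Weak compositions are counted by stars and bars.
-/

open Finset SimpleGraph

lemma SimpleGraph.Preconnected.iff_of_forall_adj {V : Type*} {G : SimpleGraph V}
    (hG : G.Preconnected) {φ : V → Prop} (h : ∀ ⦃x y⦄, G.Adj x y → (φ x ↔ φ y))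
    (x y : V) : φ x ↔ φ y := by
  obtain ⟨w⟩ := hG x y
  induction w with
  | nil => rfl
  | cons hadj _ ih => exact (h hadj).trans ih

section bipartiteGraph

variable {ℓ r : ℕ} {E : Finset (Fin ℓ × Fin r)}

@[simp]
lemma bipartiteGraph_adj_inl_inr {p : Fin ℓ} {q : Fin r} :
    (bipartiteGraph ℓ r E).Adj (.inl p) (.inr q) ↔ (p, q) ∈ E := by
  simp [bipartiteGraph]

@[simp]
lemma bipartiteGraph_adj_inr_inl {p : Fin ℓ} {q : Fin r} :
    (bipartiteGraph ℓ r E).Adj (.inr q) (.inl p) ↔ (p, q) ∈ E := by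
  simp [bipartiteGraph]

@[simp]
lemma not_bipartiteGraph_adj_inl_inl {p t : Fin ℓ} :
    ¬ (bipartiteGraph ℓ r E).Adj (.inl p) (.inl t) := by
  simp [bipartiteGraph]

@[simp]
lemma not_bipartiteGraph_adj_inr_inr {q u : Fin r} :
    ¬ (bipartiteGraph ℓ r E).Adj (.inr q) (.inr u) := by
  simp [bipartiteGraph]

lemma card_edgeSet_bipartiteGraph : Nat.card (bipartiteGraph ℓ r E).edgeSet = #E := by
  have hdiag : Disjoint ((fun e : Fin ℓ × Fin r => s(Sum.inl e.1, Sum.inr e.2)) '' ↑E)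
      Sym2.diagSet := by
    rw [Set.disjoint_left]
    rintro _ ⟨e, -, rfl⟩
    simp
  rw [bipartiteGraph, edgeSet_fromEdgeSet, sdiff_eq_left.mpr hdiag,
    Nat.card_image_of_injective (fun e e' h => by simpa [Prod.ext_iff] using h),
    Nat.card_coe_set_eq, Set.ncard_coe_finset]

lemma isTree_bipartiteGraph_iff :
    (bipartiteGraph ℓ r E).IsTree ↔
      (bipartiteGraph ℓ r E).Connected ∧ #E + 1 = ℓ + r := by
  rw [isTree_iff_connected_and_card, card_edgeSet_bipartiteGraph]
  simp

lemma SimpleGraph.Preconnected.iff_of_forall_mem (hE : (bipartiteGraph ℓ r E).Preconnected)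
    {L : Fin ℓ → Prop} {R : Fin r → Prop} (h : ∀ ⦃p q⦄, (p, q) ∈ E → (L p ↔ R q))
    (p : Fin ℓ) (q : Fin r) : L p ↔ R q := by
  refine hE.iff_of_forall_adj (φ := Sum.elim L R) ?_ (.inl p) (.inr q)
  rintro (p | q) (t | u) hadj
  · simp at hadj
  · exact h (by simpa using hadj)
  · exact (h (by simpa using hadj)).symm
  · simp at hadj

lemma SimpleGraph.Preconnected.exists_fst_mem [NeZero ℓ]
    (hE : (bipartiteGraph ℓ r E).Preconnected) (q : Fin r) : ∃ p, (p, q) ∈ E := by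
  by_contra! h
  simpa using hE.iff_of_forall_mem (L := fun _ => False) (R := (· = q))
    (fun p u hpu => by simpa using fun hu : u = q => h p (hu ▸ hpu)) 0 q

lemma SimpleGraph.Preconnected.exists_snd_mem [NeZero r]
    (hE : (bipartiteGraph ℓ r E).Preconnected) (p : Fin ℓ) : ∃ q, (p, q) ∈ E := by
  by_contra! h
  simpa using hE.iff_of_forall_mem (L := (· = p)) (R := fun _ => False)
    (fun t u htu => by simpa using fun ht : t = p => h u (ht ▸ htu)) p 0

end bipartiteGraph

variable {ℓ r : ℕ}

def leftNbhd (E : Finset (Fin ℓ × Fin r)) (q : Fin r) : Finset (Fin ℓ) := {p | (p, q) ∈ E}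

@[simp]
lemma mem_leftNbhd {E : Finset (Fin ℓ × Fin r)} {p : Fin ℓ} {q : Fin r} :
    p ∈ leftNbhd E q ↔ (p, q) ∈ E := by
  simp [leftNbhd]

lemma card_eq_sum_card_leftNbhd (E : Finset (Fin ℓ × Fin r)) : #E = ∑ q, #(leftNbhd E q) := by
  rw [card_eq_sum_card_fiberwise (f := Prod.snd) (t := univ) (fun _ _ => mem_univ _)]
  refine sum_congr rfl fun q _ => card_bij' (fun e _ => e.1) (fun p _ => (p, q)) ?_ ?_ ?_ ?_
  all_goals aesop

lemma Fin.monotone_partialSum (b : Fin r → ℕ) : Monotone (Fin.partialSum b) :=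
  Fin.monotone_iff_le_succ.2 fun i => by simp [Fin.partialSum_succ]

lemma Fin.partialSum_last (b : Fin r → ℕ) : Fin.partialSum b (Fin.last r) = ∑ i, b i := by
  rw [Fin.partialSum, Fin.val_last, List.take_of_length_le (by simp), List.sum_ofFn]

lemma Fin.partialSum_le_sum (b : Fin r → ℕ) (j : Fin (r + 1)) :
    Fin.partialSum b j ≤ ∑ i, b i :=
  Fin.partialSum_last b ▸ Fin.monotone_partialSum b (Fin.le_last j)

lemma Fin.exists_castSucc_le_and_le_succ {n : ℕ} (c : Fin (n + 2) → ℕ) {x : ℕ}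
    (h0 : c 0 ≤ x) (hlast : x ≤ c (Fin.last _)) :
    ∃ i : Fin (n + 1), c i.castSucc ≤ x ∧ x ≤ c i.succ := by
  by_contra! h
  have : ∀ j, c j ≤ x := Fin.induction h0 fun i hi => (h i hi).le
  exact (h (Fin.last n) (this _)).not_ge hlast

def Noncrossing (E : Finset (Fin ℓ × Fin r)) : Prop :=
  ∀ ⦃p t : Fin ℓ⦄ ⦃q u : Fin r⦄, (p, q) ∈ E → (t, u) ∈ E → p < t → q ≤ u

lemma noncrossing_iff_not_exists {E : Finset (Fin ℓ × Fin r)} :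
    Noncrossing E ↔
      ¬ ∃ (p t : Fin ℓ) (q u : Fin r), (p, q) ∈ E ∧ (t, u) ∈ E ∧ p < t ∧ u < q := by
  simp only [Noncrossing, not_exists, not_and, not_lt]

def staircase (ℓ : ℕ) (b : Fin r → ℕ) : Finset (Fin ℓ × Fin r) :=
  {e | Fin.partialSum b e.2.castSucc ≤ e.1 ∧ (e.1 : ℕ) ≤ Fin.partialSum b e.2.succ}

section staircase

variable {b : Fin r → ℕ}

@[simp]
lemma mem_staircase {p : Fin ℓ} {q : Fin r} :
    (p, q) ∈ staircase ℓ b ↔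
      Fin.partialSum b q.castSucc ≤ p ∧ p ≤ Fin.partialSum b q.succ := by
  simp [staircase]

lemma noncrossing_staircase : Noncrossing (staircase ℓ b) := by
  intro p t q u hp ht hpt
  by_contra! huq
  have := Fin.monotone_partialSum b (Fin.succ_le_castSucc_iff.mpr huq)
  simp only [mem_staircase] at hp ht
  omega

lemma card_leftNbhd_staircase (hb : ∑ i, b i < ℓ) (q : Fin r) :
    #(leftNbhd (staircase ℓ b) q) = b q + 1 := by
  have hlt : Fin.partialSum b q.succ < ℓ := (Fin.partialSum_le_sum b _).trans_lt hb
  have hle : Fin.partialSum b q.castSucc ≤ Fin.partialSum b q.succ := by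
    simp [Fin.partialSum_succ]
  have : leftNbhd (staircase ℓ b) q = Icc ⟨_, hle.trans_lt hlt⟩ ⟨_, hlt⟩ := by
    ext p
    simp [Fin.le_def]
  rw [this, Fin.card_Icc]
  simp [Fin.partialSum_succ]
  omega

lemma card_staircase (hb : ∑ i, b i < ℓ) : #(staircase ℓ b) = ∑ i, b i + r := by
  simp [card_eq_sum_card_leftNbhd, card_leftNbhd_staircase hb, sum_add_distrib]

end staircase

section staircaseTree

variable {m n : ℕ} {b : Fin (n + 1) → ℕ}

lemma connected_staircase (hb : ∑ i, b i = m) :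
    (bipartiteGraph (m + 1) (n + 1) (staircase (m + 1) b)).Connected := by
  set G := bipartiteGraph (m + 1) (n + 1) (staircase (m + 1) b)
  have hbound : ∀ j, Fin.partialSum b j < m + 1 := fun j =>
    Nat.lt_succ_of_le (hb ▸ Fin.partialSum_le_sum b j)
  have hright : ∀ q, G.Reachable (.inr 0) (.inr q) := by
    refine Fin.induction .rfl fun i hi => hi.trans ?_
    let p : Fin (m + 1) := ⟨_, hbound i.castSucc.succ⟩
    have hp : G.Adj (.inr i.castSucc) (.inl p) := by simp [p, G, Fin.partialSum_succ]
    have hp' : G.Adj (.inl p) (.inr i.succ) := by simp [p, G, Fin.partialSum_succ]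
    exact hp.reachable.trans hp'.reachable
  have hleft : ∀ p, G.Reachable (.inr 0) (.inl p) := by
    intro p
    obtain ⟨q, hq⟩ := Fin.exists_castSucc_le_and_le_succ (Fin.partialSum b) (x := p) (by simp)
      (by rw [Fin.partialSum_last, hb]; exact Nat.lt_succ_iff.mp p.isLt)
    exact (hright q).trans (Adj.reachable (by simpa [G] using hq))
  refine connected_iff_exists_forall_reachable _ |>.mpr ⟨.inr 0, ?_⟩
  rintro (p | q)
  exacts [hleft p, hright q]

lemma isTree_staircase (hb : ∑ i, b i = m) :
    (bipartiteGraph (m + 1) (n + 1) (staircase (m + 1) b)).IsTree := by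
  rw [isTree_bipartiteGraph_iff, card_staircase (by omega), hb]
  exact ⟨connected_staircase hb, by ring⟩

end staircaseTree

def degreeComposition (E : Finset (Fin ℓ × Fin r)) (q : Fin r) : ℕ := #(leftNbhd E q) - 1

lemma sum_degreeComposition [NeZero ℓ] {E : Finset (Fin ℓ × Fin r)}
    (hE : (bipartiteGraph ℓ r E).IsTree) : ∑ q, degreeComposition E q = ℓ - 1 := by
  obtain ⟨hconn, hcard⟩ := isTree_bipartiteGraph_iff.mp hE
  have hpos : ∀ q ∈ univ, 1 ≤ #(leftNbhd E q) := fun q _ => by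
    obtain ⟨p, hp⟩ := hconn.preconnected.exists_fst_mem q
    exact card_pos.mpr ⟨p, mem_leftNbhd.mpr hp⟩
  simp only [degreeComposition]
  rw [sum_tsub_distrib _ hpos, ← card_eq_sum_card_leftNbhd]
  simp
  omega

namespace Noncrossing

section

variable {E : Finset (Fin ℓ × Fin r)} (hE : Noncrossing E)
include hE

lemma mem_of_le_of_le {p a c : Fin ℓ} {q : Fin r} (hp : ∃ v, (p, v) ∈ E) (ha : (a, q) ∈ E)
    (hc : (c, q) ∈ E) (hap : a ≤ p) (hpc : p ≤ c) : (p, q) ∈ E := by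
  obtain ⟨v, hv⟩ := hp
  rcases hap.eq_or_lt with rfl | hap
  · exact ha
  rcases hpc.eq_or_lt with rfl | hpc
  · exact hc
  obtain rfl : v = q := le_antisymm (hE hv hc hpc) (hE ha hv hap)
  exact hv

lemma mem_iff_of_forall_le (hleft : ∀ p, ∃ v, (p, v) ∈ E) {a : Fin ℓ} {q : Fin r}
    (ha : (a, q) ∈ E) (hmin : ∀ p, (p, q) ∈ E → a ≤ p) (p : Fin ℓ) :
    (p, q) ∈ E ↔ a ≤ p ∧ (p : ℕ) ≤ a + degreeComposition E q := by
  have hne : (leftNbhd E q).Nonempty := ⟨a, mem_leftNbhd.mpr ha⟩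
  set z := (leftNbhd E q).max' hne
  have hz : (z, q) ∈ E := mem_leftNbhd.mp ((leftNbhd E q).max'_mem hne)
  have hIcc : leftNbhd E q = Icc a z := by
    ext p
    simp only [mem_leftNbhd, mem_Icc]
    exact ⟨fun hp => ⟨hmin p hp, (leftNbhd E q).le_max' p (mem_leftNbhd.mpr hp)⟩,
      fun ⟨hap, hpz⟩ => hE.mem_of_le_of_le (hleft p) ha hz hap hpz⟩
  have haz : a ≤ z := hmin z hz
  rw [← mem_leftNbhd, hIcc, mem_Icc, degreeComposition, hIcc, Fin.card_Icc, Fin.le_def,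
    Fin.le_def]
  omega

lemma mem_of_covBy [NeZero ℓ] (hconn : (bipartiteGraph ℓ r E).Preconnected) {z : Fin ℓ}
    {q u : Fin r} (hqu : q ⋖ u) (hz : (z, q) ∈ E) (hmax : ∀ p, (p, q) ∈ E → p ≤ z) :
    (z, u) ∈ E := by
  by_contra hzu
  -- otherwise no edge joins the left vertices `≤ z` and right vertices `≤ q` to the rest
  have hcut : ∀ ⦃p v⦄, (p, v) ∈ E → (p ≤ z ↔ v ≤ q) := by
    intro p v hpv
    refine ⟨fun hpz => ?_, fun hvq => ?_⟩
    · by_contra! hqv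
      obtain rfl : p = z := hpz.antisymm (not_lt.mp fun hpz' => hqv.not_ge (hE hpv hz hpz'))
      obtain ⟨t, ht⟩ := hconn.exists_fst_mem u
      have hut : u < v := (not_lt.mp (hqu.2 hqv)).lt_of_ne fun huv => hzu (huv ▸ hpv)
      obtain rfl : t = p := le_antisymm (not_lt.mp fun h => hut.not_ge (hE hpv ht h))
        (not_lt.mp fun h => hqu.lt.not_ge (hE ht hz h))
      exact hzu ht
    · rcases hvq.eq_or_lt with rfl | hvq
      · exact hmax p hpv
      · exact not_lt.mp fun hzp => hvq.not_ge (hE hz hpv hzp)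
  simpa [hqu.lt.not_ge] using hconn.iff_of_forall_mem hcut z u

lemma zero_zero_mem [NeZero ℓ] [NeZero r] (hconn : (bipartiteGraph ℓ r E).Preconnected) :
    ((0 : Fin ℓ), (0 : Fin r)) ∈ E := by
  obtain ⟨t, ht⟩ := hconn.exists_fst_mem 0
  obtain ⟨v, hv⟩ := hconn.exists_snd_mem 0
  rcases (Fin.zero_le t).eq_or_lt with rfl | h0t
  · exact ht
  · rwa [le_antisymm (hE hv ht h0t) (Fin.zero_le v)] at hv

end

lemma eq_staircase {m n : ℕ} {E : Finset (Fin (m + 1) × Fin (n + 1))} (hE : Noncrossing E)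
    (hT : (bipartiteGraph (m + 1) (n + 1) E).IsTree) :
    E = staircase (m + 1) (degreeComposition E) := by
  set b := degreeComposition E
  have hconn := hT.connected.preconnected
  have hleft := hconn.exists_snd_mem
  have hsum : ∑ q, b q = m := sum_degreeComposition hT
  have hbound : ∀ j, Fin.partialSum b j < m + 1 := fun j =>
    Nat.lt_succ_of_le (hsum ▸ Fin.partialSum_le_sum b j)
  suffices h : ∀ q p, (p, q) ∈ E ↔ (p, q) ∈ staircase (m + 1) b by
    ext ⟨p, q⟩; exact h q p
  refine Fin.induction (fun p => ?_) fun i hi p => ?_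
  · rw [hE.mem_iff_of_forall_le hleft (hE.zero_zero_mem hconn) (fun p _ => Fin.zero_le p)]
    simp only [mem_staircase, Fin.partialSum_succ, Fin.castSucc_zero, Fin.partialSum_zero]
    simp [b]
  · let z : Fin (m + 1) := ⟨_, hbound i.castSucc.succ⟩
    have hz : (z, i.castSucc) ∈ E := (hi z).mpr (by simp [z, b, Fin.partialSum_succ])
    have hcov : i.castSucc ⋖ i.succ := by simp [Fin.covBy_iff]
    have hzs := hE.mem_of_covBy hconn hcov hz fun p hp => by
      simpa [z, Fin.le_def] using (mem_staircase.mp ((hi p).mp hp)).2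
    rw [hE.mem_iff_of_forall_le hleft hzs fun p hp =>
      not_lt.mp fun hpz => hcov.lt.not_ge (hE hp hz hpz)]
    simp [z, b, Fin.partialSum_succ, Fin.le_def]

end Noncrossing

lemma degreeComposition_staircase {m n : ℕ} {b : Fin (n + 1) → ℕ} (hb : ∑ i, b i = m) :
    degreeComposition (staircase (m + 1) b) = b := by
  ext q
  simp [degreeComposition, card_leftNbhd_staircase (by omega : ∑ i, b i < m + 1)]

def noncrossingTreeEquiv (m n : ℕ) :
    {E : Finset (Fin (m + 1) × Fin (n + 1)) |
        (bipartiteGraph (m + 1) (n + 1) E).IsTree ∧ Noncrossing E} ≃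
      {b : Fin (n + 1) → ℕ // ∑ i, b i = m} where
  toFun E := ⟨degreeComposition E.1, sum_degreeComposition E.2.1⟩
  invFun b := ⟨staircase (m + 1) b.1, isTree_staircase b.2, noncrossing_staircase⟩
  left_inv E := Subtype.ext (E.2.2.eq_staircase E.2.1).symm
  right_inv b := Subtype.ext (degreeComposition_staircase b.2)

/-- The number of bipartite noncrossing trees with `ℓ` ordered left vertices and `r`
ordered right vertices equals `C(ℓ+r-2, ℓ-1)`. -/
theorem stmt1 (ℓ r : ℕ) (hℓ : 1 ≤ ℓ) (hr : 1 ≤ r) :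
    {E : Finset (Fin ℓ × Fin r) |
        (bipartiteGraph ℓ r E).IsTree ∧
        ¬ ∃ (p t : Fin ℓ) (q u : Fin r),
            (p, q) ∈ E ∧ (t, u) ∈ E ∧ p < t ∧ u < q}.ncard
      = (ℓ + r - 2).choose (ℓ - 1) := by
  obtain ⟨m, rfl⟩ := Nat.exists_eq_add_of_le' hℓ
  obtain ⟨n, rfl⟩ := Nat.exists_eq_add_of_le' hr
  simp only [← noncrossing_iff_not_exists]
  rw [← Nat.card_coe_set_eq,
    Nat.card_congr ((noncrossingTreeEquiv m n).trans (Sym.equivNatSumOfFintype _ m).symm),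
    Sym.natCard_sym_eq_choose, Nat.card_fin]
  congr 1
  omega
end

section
/- For every n ≥ 1, the type C Chan-Robbins-Yuen polytope CRYC_{n+1} = F_{K^C_{n+1}}(2,0,…,0) has exactly 3^n vertices. -/
/-- Edges of the complete signed graph `K^C_{n+1}`: either a pair `i < j` together with
a sign (`true` = positive, `false` = negative), or a loop `(i,i,+)` at a vertex `i`. -/
abbrev EdgeC (n : ℕ) := ({p : Fin (n + 1) × Fin (n + 1) // p.1 < p.2} × Bool) ⊕ Fin (n + 1)

/-- The type `C` root associated to an edge: `e_i - e_j` for a negative edge,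
`e_i + e_j` for a positive edge, and `2e_i` for a loop at `i`. -/
def rootC (n : ℕ) (e : EdgeC n) : Fin (n + 1) → ℝ :=
  match e with
  | Sum.inl e => fun k =>
      (if k = e.1.1.1 then 1 else 0) + (if k = e.1.1.2 then (if e.2 then 1 else -1) else 0)
  | Sum.inr i => fun k => if k = i then 2 else 0

/-- The type `C` Chan-Robbins-Yuen polytope `CRYC_{n+1} = F_{K^C_{n+1}}(2,0,…,0)`. -/
def CRYC (n : ℕ) : Set (EdgeC n → ℝ) :=
  {b | (∀ e, 0 ≤ b e) ∧
    (∑ e, b e • rootC n e) = fun k => if k = 0 then (2 : ℝ) else 0}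

/-!
A point `x` of a polytope `{x ≥ 0, M x = a}` is a vertex iff no other point of the polytope has
its support inside that of `x`. Given `x ∈ CRYC`, fix for every vertex `u` one negative edge
`(t, u, -)` carrying flow into it; following these edges down from the ends `i, j` of a positive
edge or loop that carries flow gives two paths from `0`, and one unit along each path, absorbed by
that edge, is a point of the polytope supported inside `x`. So every vertex is such a tree flow.
Conversely nothing else is supported inside a tree flow: subtracting a multiple of the tree flow
leaves a flow on the tree edges that is balanced away from `0`, and such a flow vanishes.

A tree flow amounts to an unordered pair of chains from `0` agreeing below every common vertex.
Ordering the pair so that the second chain is the one that branches off first, it is recorded by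
labelling each vertex `1, …, n` with `1` (first chain), `2` (second chain only) or `0`, and every
labelling arises from exactly one vertex.
-/

open Filter Topology

section SupportMinimal

variable {ι V : Type*} [AddCommGroup V] [Module ℝ V]

theorem mem_extremePoints_iff_forall_support_subset [Finite ι] (f : (ι → ℝ) →ₗ[ℝ] V)
    (a : V) {x : ι → ℝ} :
    x ∈ {y : ι → ℝ | (∀ i, 0 ≤ y i) ∧ f y = a}.extremePoints ℝ ↔
      x ∈ {y : ι → ℝ | (∀ i, 0 ≤ y i) ∧ f y = a} ∧
        ∀ y ∈ {y : ι → ℝ | (∀ i, 0 ≤ y i) ∧ f y = a},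
          (∀ i, x i = 0 → y i = 0) → y = x := by
  rw [mem_extremePoints_iff_left]
  refine and_congr_right fun hx => ⟨fun hext y hy hsupp => ?_, fun huniq y hy z hz hxyz => ?_⟩
  · -- `x` lies strictly between `y` and `x + t • (x - y)`, a point of the set for small `t > 0`
    have hsmall : ∀ᶠ t in 𝓝[>] (0 : ℝ), ∀ i, 0 ≤ x i + t * (x i - y i) := by
      refine eventually_all.2 fun i => ?_
      rcases (hx.1 i).eq_or_lt with hxi | hxi
      · exact Eventually.of_forall fun t => by simp [← hxi, hsupp i hxi.symm]
      · have hlim : Tendsto (fun t : ℝ => x i + t * (x i - y i)) (𝓝[>] 0) (𝓝 (x i)) :=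
          tendsto_nhdsWithin_of_tendsto_nhds
            ((by fun_prop : Continuous fun t : ℝ => x i + t * (x i - y i)).tendsto' 0 _ (by simp))
        exact (hlim.eventually (lt_mem_nhds hxi)).mono fun _ h => h.le
    obtain ⟨t, hnonneg, ht⟩ := (hsmall.and self_mem_nhdsWithin).exists
    refine hext y hy (x + t • (x - y)) ⟨hnonneg, by simp [hx.2, hy.2]⟩
      ⟨t / (1 + t), 1 / (1 + t), by positivity, by positivity, by field_simp; ring, ?_⟩
    ext i
    simp only [Pi.add_apply, Pi.smul_apply, Pi.sub_apply, smul_eq_mul]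
    field_simp
    ring
  · obtain ⟨a, b, ha, hb, -, rfl⟩ := hxyz
    refine huniq y hy fun i hi => ?_
    simp only [Pi.add_apply, Pi.smul_apply, smul_eq_mul] at hi
    nlinarith [hy.1 i, hz.1 i, mul_nonneg ha.le (hy.1 i), mul_nonneg hb.le (hz.1 i)]

end SupportMinimal

namespace CRYC

variable {n : ℕ}

def negEdge (t u : Fin (n + 1)) (h : t < u) : EdgeC n := Sum.inl (⟨(t, u), h⟩, false)

def posEdge (t u : Fin (n + 1)) (h : t < u) : EdgeC n := Sum.inl (⟨(t, u), h⟩, true)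

def loopEdge (i : Fin (n + 1)) : EdgeC n := Sum.inr i

def topEdge (i j : Fin (n + 1)) : EdgeC n :=
  if h : i = j then loopEdge i else posEdge (min i j) (max i j) (min_lt_max.2 h)

lemma negEdge_inj {t u t' u' : Fin (n + 1)} {h : t < u} {h' : t' < u'} :
    negEdge t u h = negEdge t' u' h' ↔ t = t' ∧ u = u' := by
  simp [negEdge]

lemma topEdge_ne_negEdge (i j t u : Fin (n + 1)) (h : t < u) : topEdge i j ≠ negEdge t u h := by
  unfold topEdge
  split <;> simp [negEdge, posEdge, loopEdge]

lemma topEdge_comm (i j : Fin (n + 1)) : (topEdge i j : EdgeC n) = topEdge j i := by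
  unfold topEdge
  by_cases h : i = j
  · subst h; rfl
  · simp only [h, Ne.symm h, dite_false, min_comm i j, max_comm i j]

lemma topEdge_eq_topEdge {i j i' j' : Fin (n + 1)} (h : (topEdge i j : EdgeC n) = topEdge i' j') :
    i = i' ∧ j = j' ∨ i = j' ∧ j = i' := by
  unfold topEdge at h
  split_ifs at h with hij hij' <;> simp [loopEdge, posEdge] at h
  · subst hij hij'; simp [h]
  · rcases le_total i j with hle | hle <;> rcases le_total i' j' with hle' | hle' <;>
      simp only [hle, hle', min_eq_left, min_eq_right, max_eq_left, max_eq_right] at h <;> tauto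

lemma edge_cases (e : EdgeC n) : (∃ t u h, e = negEdge t u h) ∨ ∃ i j, e = topEdge i j := by
  rcases e with ⟨⟨⟨t, u⟩, h⟩, _ | _⟩ | i
  · exact Or.inl ⟨t, u, h, rfl⟩
  · refine Or.inr ⟨t, u, ?_⟩
    simp [topEdge, h.ne, min_eq_left h.le, max_eq_right h.le, posEdge]
  · exact Or.inr ⟨i, i, by simp [topEdge, loopEdge]⟩

lemma rootC_negEdge (t u : Fin (n + 1)) (h : t < u) :
    rootC n (negEdge t u h) = Pi.single t 1 - Pi.single u 1 := by
  ext k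
  simp only [rootC, negEdge, Pi.sub_apply, Pi.single_apply, Bool.false_eq_true, if_false]
  split_ifs <;> norm_num

lemma rootC_topEdge (i j : Fin (n + 1)) :
    rootC n (topEdge i j) = Pi.single i 1 + Pi.single j 1 := by
  ext k
  unfold topEdge
  split_ifs with hij
  · subst hij
    simp only [rootC, loopEdge, Pi.add_apply, Pi.single_apply]
    split_ifs <;> norm_num
  · rcases le_total i j with hle | hle <;>
      simp only [rootC, posEdge, hle, min_eq_left, min_eq_right, max_eq_left, max_eq_right,
        Pi.add_apply, Pi.single_apply, if_true, add_comm]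

noncomputable def netFlow (n : ℕ) : (EdgeC n → ℝ) →ₗ[ℝ] Fin (n + 1) → ℝ :=
  Fintype.linearCombination ℝ (rootC n)

lemma netFlow_apply (f : EdgeC n → ℝ) (k : Fin (n + 1)) :
    netFlow n f k = ∑ e, f e * rootC n e k := by
  simp [netFlow, Fintype.linearCombination_apply, Finset.sum_apply]

lemma netFlow_single (e : EdgeC n) : netFlow n (Pi.single e 1) = rootC n e := by
  simp [netFlow, Fintype.linearCombination_apply_single]

lemma CRYC_eq : CRYC n = {y | (∀ e, 0 ≤ y e) ∧ netFlow n y = Pi.single 0 2} := by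
  ext y
  have : (Pi.single 0 2 : Fin (n + 1) → ℝ) = fun k => if k = 0 then 2 else 0 := by
    ext k; simp [Pi.single_apply]
  simp [CRYC, netFlow, Fintype.linearCombination_apply, this]

lemma mem_CRYC {x : EdgeC n → ℝ} :
    x ∈ CRYC n ↔ (∀ e, 0 ≤ x e) ∧ netFlow n x = Pi.single 0 2 := by
  rw [CRYC_eq]; rfl

lemma single_one_nonneg {α : Type*} [DecidableEq α] (a b : α) :
    0 ≤ (Pi.single a 1 : α → ℝ) b := by
  rw [Pi.single_apply]
  split_ifs <;> norm_num

lemma rootC_topEdge_pos (i j : Fin (n + 1)) : 0 < rootC n (topEdge i j) i := by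
  rw [rootC_topEdge, Pi.add_apply, Pi.single_eq_same]
  linarith [single_one_nonneg j i]

def IsParentMap (p : Fin (n + 1) → Fin (n + 1)) : Prop := ∀ u, u ≠ 0 → p u < u

section Ancestors

variable {p q : Fin (n + 1) → Fin (n + 1)} {u w : Fin (n + 1)}

/-- The vertices met from `u` by following `p` for as long as it decreases. -/
noncomputable def ancestors (p : Fin (n + 1) → Fin (n + 1)) (u : Fin (n + 1)) :
    Finset (Fin (n + 1)) :=
  if p u < u then insert u (ancestors p (p u)) else {u}
termination_by u.val

lemma ancestors_of_lt (h : p u < u) : ancestors p u = insert u (ancestors p (p u)) := by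
  rw [ancestors, if_pos h]

lemma ancestors_of_not_lt (h : ¬ p u < u) : ancestors p u = {u} := by
  rw [ancestors, if_neg h]

lemma ancestors_zero : ancestors p 0 = {0} :=
  ancestors_of_not_lt (Fin.not_lt_zero _)

lemma self_mem_ancestors : u ∈ ancestors p u := by
  unfold ancestors; split <;> simp

lemma le_of_mem_ancestors (hw : w ∈ ancestors p u) : w ≤ u := by
  induction u using WellFoundedLT.induction generalizing w with
  | _ u ih =>
    by_cases h : p u < u
    · rw [ancestors_of_lt h, Finset.mem_insert] at hw
      rcases hw with rfl | hw
      · exact le_rfl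
      · exact (ih _ h hw).trans h.le
    · rw [ancestors_of_not_lt h, Finset.mem_singleton] at hw
      exact hw.le

lemma sup_ancestors : (ancestors p u).sup id = u :=
  le_antisymm (Finset.sup_le fun _ => le_of_mem_ancestors)
    (Finset.le_sup (f := id) self_mem_ancestors)

lemma zero_mem_ancestors (hp : IsParentMap p) : 0 ∈ ancestors p u := by
  induction u using WellFoundedLT.induction with
  | _ u ih =>
    rcases eq_or_ne u 0 with rfl | hu
    · exact self_mem_ancestors
    · rw [ancestors_of_lt (hp u hu)]
      exact Finset.mem_insert_of_mem (ih _ (hp u hu))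

lemma ancestors_of_mem (hw : w ∈ ancestors p u) :
    ancestors p w = (ancestors p u).filter (· ≤ w) := by
  induction u using WellFoundedLT.induction with
  | _ u ih =>
    by_cases h : p u < u
    · rw [ancestors_of_lt h] at hw ⊢
      rcases Finset.mem_insert.1 hw with rfl | hw
      · rw [Finset.filter_true_of_mem fun v hv => ?_, ← ancestors_of_lt h]
        rcases Finset.mem_insert.1 hv with rfl | hv
        exacts [le_rfl, (le_of_mem_ancestors hv).trans h.le]
      · rw [Finset.filter_insert, if_neg (not_le.2 ((le_of_mem_ancestors hw).trans_lt h)),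
          ih _ h hw]
    · rw [ancestors_of_not_lt h, Finset.mem_singleton] at hw
      subst hw
      rw [ancestors_of_not_lt h, Finset.filter_singleton, if_pos le_rfl]

lemma parent_eq_sup (hp : IsParentMap p) (hw : w ∈ ancestors p u) (hw0 : w ≠ 0) :
    p w = ((ancestors p u).filter (· < w)).sup id := by
  have hlt := hp w hw0
  have hfilter : (ancestors p u).filter (· < w) = ancestors p (p w) :=
    calc (ancestors p u).filter (· < w) = (ancestors p w).filter (· < w) := by
          rw [ancestors_of_mem hw, Finset.filter_filter]
          exact Finset.filter_congr fun v _ => ⟨fun h => ⟨h.le, h⟩, And.right⟩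
      _ = ancestors p (p w) := by
          rw [ancestors_of_lt hlt, Finset.filter_insert, if_neg (lt_irrefl w),
            Finset.filter_true_of_mem fun v hv => (le_of_mem_ancestors hv).trans_lt hlt]
  rw [hfilter, sup_ancestors]

lemma ancestors_congr (h : ∀ w ∈ ancestors p u, w ≠ 0 → q w = p w) :
    ancestors q u = ancestors p u := by
  induction u using WellFoundedLT.induction with
  | _ u ih =>
    rcases eq_or_ne u 0 with rfl | hu
    · rw [ancestors_zero, ancestors_zero]
    have hqu := h u self_mem_ancestors hu
    by_cases hlt : p u < u
    · rw [ancestors_of_lt hlt, ancestors_of_lt (hqu ▸ hlt), hqu, ih _ hlt fun w hw =>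
        h w (by rw [ancestors_of_lt hlt]; exact Finset.mem_insert_of_mem hw)]
    · rw [ancestors_of_not_lt hlt, ancestors_of_not_lt (hqu ▸ hlt)]

lemma ancestors_eq_filter {C : Finset (Fin (n + 1))} (hC : 0 ∈ C)
    (hq : ∀ w ∈ C, w ≠ 0 → q w = (C.filter (· < w)).sup id) (hu : u ∈ C) :
    ancestors q u = C.filter (· ≤ u) := by
  induction u using WellFoundedLT.induction with
  | _ u ih =>
    rcases eq_or_ne u 0 with rfl | hu0
    · rw [ancestors_zero]
      ext v
      simp only [Finset.mem_singleton, Finset.mem_filter]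
      exact ⟨fun hv => ⟨hv ▸ hC, hv.le⟩, fun hv => le_antisymm hv.2 (Fin.zero_le v)⟩
    obtain ⟨m, hm, hqm⟩ := Finset.exists_mem_eq_sup (C.filter (· < u))
      ⟨0, Finset.mem_filter.2 ⟨hC, Fin.pos_iff_ne_zero.2 hu0⟩⟩ id
    rw [id_eq, ← hq u hu hu0] at hqm
    obtain ⟨hmC, hmu⟩ := Finset.mem_filter.1 hm
    rw [ancestors_of_lt (hqm ▸ hmu), hqm, ih m hmu hmC]
    ext v
    simp only [Finset.mem_insert, Finset.mem_filter]
    constructor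
    · rintro (rfl | ⟨hv, hvm⟩)
      exacts [⟨hu, le_rfl⟩, ⟨hv, hvm.trans hmu.le⟩]
    · rintro ⟨hv, hvu⟩
      rcases hvu.eq_or_lt with rfl | hvu
      · exact Or.inl rfl
      · refine Or.inr ⟨hv, ?_⟩
        rw [← hqm, hq u hu hu0]
        exact Finset.le_sup (f := id) (Finset.mem_filter.2 ⟨hv, hvu⟩)

end Ancestors

section Flows

variable {p q : Fin (n + 1) → Fin (n + 1)} {i j u w : Fin (n + 1)}

noncomputable def arcFlow (p : Fin (n + 1) → Fin (n + 1)) (w : Fin (n + 1)) : EdgeC n → ℝ :=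
  if h : p w < w then Pi.single (negEdge (p w) w h) 1 else 0

noncomputable def pathFlow (p : Fin (n + 1) → Fin (n + 1)) (u : Fin (n + 1)) : EdgeC n → ℝ :=
  ∑ w ∈ ancestors p u, arcFlow p w

/-- Two units leave `0` along the paths to `i` and `j`, and are absorbed by `topEdge i j`. -/
noncomputable def treeFlow (p : Fin (n + 1) → Fin (n + 1)) (i j : Fin (n + 1)) :
    EdgeC n → ℝ :=
  pathFlow p i + pathFlow p j + Pi.single (topEdge i j) 1

lemma arcFlow_nonneg (e : EdgeC n) : 0 ≤ arcFlow p w e := by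
  unfold arcFlow
  split
  · exact single_one_nonneg _ e
  · exact le_rfl

lemma netFlow_pathFlow (hp : IsParentMap p) (u : Fin (n + 1)) :
    netFlow n (pathFlow p u) = Pi.single 0 1 - Pi.single u 1 := by
  induction u using WellFoundedLT.induction with
  | _ u ih =>
    rcases eq_or_ne u 0 with rfl | hu
    · simp [pathFlow, ancestors_zero, arcFlow]
    have hlt := hp u hu
    rw [pathFlow, ancestors_of_lt hlt,
      Finset.sum_insert fun h => (le_of_mem_ancestors h).not_gt hlt, map_add, ← pathFlow,
      ih _ hlt, arcFlow, dif_pos hlt, netFlow_single, rootC_negEdge]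
    abel

lemma pathFlow_nonneg (e : EdgeC n) : 0 ≤ pathFlow p u e := by
  rw [pathFlow, Finset.sum_apply]
  exact Finset.sum_nonneg fun w _ => arcFlow_nonneg e

lemma pathFlow_ne_zero {e : EdgeC n} (he : pathFlow p u e ≠ 0) :
    ∃ w ∈ ancestors p u, ∃ h : p w < w, e = negEdge (p w) w h := by
  rw [pathFlow, Finset.sum_apply] at he
  obtain ⟨w, hw, hne⟩ := Finset.exists_ne_zero_of_sum_ne_zero he
  unfold arcFlow at hne
  split_ifs at hne with h
  · exact ⟨w, hw, h, by_contra fun hew => hne (Pi.single_eq_of_ne hew 1)⟩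
  · exact absurd rfl hne

lemma pathFlow_pos (hw : w ∈ ancestors p u) (h : p w < w) :
    0 < pathFlow p u (negEdge (p w) w h) := by
  rw [pathFlow, Finset.sum_apply]
  refine lt_of_lt_of_le ?_ (Finset.single_le_sum (fun v _ => arcFlow_nonneg _) hw)
  simp [arcFlow, h]

lemma pathFlow_congr (h : ∀ w ∈ ancestors p u, w ≠ 0 → q w = p w) :
    pathFlow q u = pathFlow p u := by
  rw [pathFlow, pathFlow, ancestors_congr h]
  refine Finset.sum_congr rfl fun w hw => ?_
  rcases eq_or_ne w 0 with rfl | hw0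
  · simp [arcFlow]
  · simp only [arcFlow, h w hw hw0]

lemma treeFlow_comm : treeFlow p i j = treeFlow p j i := by
  rw [treeFlow, treeFlow, topEdge_comm, add_comm (pathFlow p i)]

lemma treeFlow_nonneg (e : EdgeC n) : 0 ≤ treeFlow p i j e :=
  add_nonneg (add_nonneg (pathFlow_nonneg e) (pathFlow_nonneg e))
    (single_one_nonneg _ e)

lemma treeFlow_topEdge : treeFlow p i j (topEdge i j) = 1 := by
  have hpath : ∀ u, pathFlow p u (topEdge i j) = 0 := fun u => by
    by_contra hne
    obtain ⟨w, -, h, he⟩ := pathFlow_ne_zero hne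
    exact topEdge_ne_negEdge _ _ _ _ h he
  simp [treeFlow, hpath]

lemma treeFlow_ne_zero {e : EdgeC n} (he : treeFlow p i j e ≠ 0) :
    e = topEdge i j ∨ ∃ w, (w ∈ ancestors p i ∨ w ∈ ancestors p j) ∧
      ∃ h : p w < w, e = negEdge (p w) w h := by
  by_cases hi : pathFlow p i e = 0
  · by_cases hj : pathFlow p j e = 0
    · left
      by_contra hne
      simp [treeFlow, hi, hj, Pi.single_eq_of_ne hne] at he
    · obtain ⟨w, hw, h, rfl⟩ := pathFlow_ne_zero hj
      exact Or.inr ⟨w, Or.inr hw, h, rfl⟩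
  · obtain ⟨w, hw, h, rfl⟩ := pathFlow_ne_zero hi
    exact Or.inr ⟨w, Or.inl hw, h, rfl⟩

lemma treeFlow_mem_CRYC (hp : IsParentMap p) : treeFlow p i j ∈ CRYC n := by
  refine mem_CRYC.2 ⟨treeFlow_nonneg, ?_⟩
  rw [treeFlow, map_add, map_add, netFlow_pathFlow hp, netFlow_pathFlow hp, netFlow_single,
    rootC_topEdge, show (2 : ℝ) = 1 + 1 by norm_num, Pi.single_add]
  abel

lemma treeFlow_congr (h : ∀ w ∈ ancestors p i ∪ ancestors p j, w ≠ 0 → q w = p w) :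
    treeFlow q i j = treeFlow p i j := by
  rw [treeFlow, treeFlow,
    pathFlow_congr fun w hw => h w (Finset.mem_union_left _ hw),
    pathFlow_congr fun w hw => h w (Finset.mem_union_right _ hw)]

lemma treeFlow_pos (hw : w ∈ ancestors p i ∪ ancestors p j) (h : p w < w) :
    0 < treeFlow p i j (negEdge (p w) w h) := by
  have hpaths : 0 < pathFlow p i (negEdge (p w) w h) + pathFlow p j (negEdge (p w) w h) := by
    rcases Finset.mem_union.1 hw with hw | hw
    · exact add_pos_of_pos_of_nonneg (pathFlow_pos hw h) (pathFlow_nonneg _)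
    · exact add_pos_of_nonneg_of_pos (pathFlow_nonneg _) (pathFlow_pos hw h)
  exact add_pos_of_pos_of_nonneg hpaths (single_one_nonneg _ _)

lemma ancestors_eq_of_treeFlow_eq (hp : IsParentMap p) {i' j' : Fin (n + 1)}
    (h : treeFlow p i j = treeFlow q i' j') :
    ancestors p i = ancestors q i' ∧ ancestors p j = ancestors q j' ∨
      ancestors p i = ancestors q j' ∧ ancestors p j = ancestors q i' := by
  have htop : topEdge i j = topEdge i' j' := by
    have hne : treeFlow q i' j' (topEdge i j) ≠ 0 := by
      rw [← h, treeFlow_topEdge]; exact one_ne_zero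
    rcases treeFlow_ne_zero hne with he | ⟨w, -, hw, he⟩
    exacts [he, absurd he (topEdge_ne_negEdge _ _ _ _ _)]
  have hqp : ∀ w ∈ ancestors p i ∪ ancestors p j, w ≠ 0 → q w = p w := by
    intro w hw hw0
    have hne : treeFlow q i' j' (negEdge (p w) w (hp w hw0)) ≠ 0 := by
      rw [← h]; exact (treeFlow_pos hw _).ne'
    rcases treeFlow_ne_zero hne with he | ⟨v, -, hv, he⟩
    · exact absurd he.symm (topEdge_ne_negEdge _ _ _ _ _)
    · obtain ⟨hpq, rfl⟩ := negEdge_inj.1 he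
      exact hpq.symm
  rw [← ancestors_congr fun w hw => hqp w (Finset.mem_union_left _ hw),
    ← ancestors_congr fun w hw => hqp w (Finset.mem_union_right _ hw)]
  rcases topEdge_eq_topEdge htop with ⟨rfl, rfl⟩ | ⟨rfl, rfl⟩
  exacts [Or.inl ⟨rfl, rfl⟩, Or.inr ⟨rfl, rfl⟩]

end Flows

section Extreme

variable {p : Fin (n + 1) → Fin (n + 1)} {i j : Fin (n + 1)}

/-- At the highest edge carrying flow, the upper end would be unbalanced. -/
theorem eq_zero_of_balanced {f : EdgeC n → ℝ}
    (hf : ∀ e, f e ≠ 0 → ∃ w h, e = negEdge (p w) w h)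
    (hbal : ∀ k ≠ 0, netFlow n f k = 0) : f = 0 := by
  suffices h : ∀ u t (htu : t < u), f (negEdge t u htu) = 0 by
    ext e
    by_contra he
    obtain ⟨w, hw, rfl⟩ := hf e he
    exact he (h _ _ hw)
  intro u
  induction u using WellFoundedGT.induction with
  | _ u ih =>
    intro t htu
    by_contra hne
    obtain ⟨w, hw, hew⟩ := hf _ hne
    obtain ⟨rfl, rfl⟩ := negEdge_inj.1 hew
    have hflow : netFlow n f u = -f (negEdge (p u) u htu) := by
      rw [netFlow_apply, Finset.sum_eq_single (negEdge (p u) u htu)]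
      · simp [rootC_negEdge, htu.ne']
      · intro e _ he
        by_cases hfe : f e = 0
        · rw [hfe, zero_mul]
        obtain ⟨v, hv, rfl⟩ := hf e hfe
        have hvu : u ≠ v := by rintro rfl; exact he rfl
        have hpv : u ≠ p v := by rintro rfl; exact hfe (ih v hv _ hv)
        simp [rootC_negEdge, hvu, hpv]
      · simp
    have := hbal u (ne_of_gt (lt_of_le_of_lt (Fin.zero_le _) htu))
    exact hne (by linarith)

theorem eq_treeFlow_of_support_subset (hp : IsParentMap p) {y : EdgeC n → ℝ} (hy : y ∈ CRYC n)
    (hsupp : ∀ e, treeFlow p i j e = 0 → y e = 0) : y = treeFlow p i j := by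
  rw [mem_CRYC] at hy
  set s := topEdge i j
  -- subtracting the right multiple of the tree flow leaves a flow on tree edges only
  set f := y - y s • treeFlow p i j with hf
  have hfs : f s = 0 := by simp [f, s, treeFlow_topEdge]
  have hnet : netFlow n f = (1 - y s) • Pi.single 0 2 := by
    rw [hf, map_sub, map_smul, hy.2, (mem_CRYC.1 (treeFlow_mem_CRYC hp)).2, sub_smul, one_smul]
  have hf0 : f = 0 := by
    refine eq_zero_of_balanced (p := p) (fun e he => ?_) fun k hk => by simp [hnet, hk]
    have hv : treeFlow p i j e ≠ 0 := fun hv => he (by simp [f, hv, hsupp e hv])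
    rcases treeFlow_ne_zero hv with rfl | ⟨w, -, h, rfl⟩
    · exact absurd hfs he
    · exact ⟨w, h, rfl⟩
  have hys : y s = 1 := by
    have := congrFun hnet 0
    simp only [hf0, map_zero, Pi.zero_apply, Pi.smul_apply, Pi.single_eq_same, smul_eq_mul] at this
    linarith
  rw [hf, hys, one_smul, sub_eq_zero] at hf0
  exact hf0

theorem treeFlow_mem_extremePoints (hp : IsParentMap p) (i j : Fin (n + 1)) :
    treeFlow p i j ∈ (CRYC n).extremePoints ℝ := by
  rw [CRYC_eq, mem_extremePoints_iff_forall_support_subset]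
  exact ⟨CRYC_eq ▸ treeFlow_mem_CRYC hp, fun y hy hsupp =>
    eq_treeFlow_of_support_subset hp (CRYC_eq ▸ hy) hsupp⟩

end Extreme

section Cover

variable {x : EdgeC n → ℝ} {u w : Fin (n + 1)}

noncomputable def inParent (x : EdgeC n → ℝ) (u : Fin (n + 1)) : Fin (n + 1) :=
  if h : ∃ t, ∃ htu : t < u, x (negEdge t u htu) ≠ 0 then h.choose else 0

lemma isParentMap_inParent (x : EdgeC n → ℝ) : IsParentMap (inParent x) := by
  intro u hu
  unfold inParent
  split_ifs with h
  · exact h.choose_spec.1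
  · exact Fin.pos_iff_ne_zero.2 hu

lemma inParent_spec (h : ∃ t, ∃ htu : t < u, x (negEdge t u htu) ≠ 0) :
    ∃ hlt : inParent x u < u, x (negEdge (inParent x u) u hlt) ≠ 0 := by
  simp only [inParent, dif_pos h]
  exact h.choose_spec

lemma exists_negEdge_ne_zero (hx : x ∈ CRYC n) (hu : u ≠ 0) {e : EdgeC n} (he : x e ≠ 0)
    (hroot : 0 < rootC n e u) : ∃ t, ∃ htu : t < u, x (negEdge t u htu) ≠ 0 := by
  by_contra! hno
  rw [mem_CRYC] at hx
  have hterm : ∀ e', 0 ≤ x e' * rootC n e' u := by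
    intro e'
    rcases edge_cases e' with ⟨t, v, htv, rfl⟩ | ⟨i, j, rfl⟩
    · rcases eq_or_ne v u with rfl | hv
      · simp [hno t htv]
      · refine mul_nonneg (hx.1 _) ?_
        simp only [rootC_negEdge, Pi.sub_apply, Pi.single_eq_of_ne' hv, sub_zero]
        exact single_one_nonneg _ _
    · refine mul_nonneg (hx.1 _) ?_
      simp only [rootC_topEdge, Pi.add_apply]
      exact add_nonneg (single_one_nonneg _ _) (single_one_nonneg _ _)
  have hpos : 0 < netFlow n x u := by
    rw [netFlow_apply]
    exact Finset.sum_pos' (fun e' _ => hterm e')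
      ⟨e, Finset.mem_univ _, mul_pos (lt_of_le_of_ne (hx.1 e) (Ne.symm he)) hroot⟩
  simp [hx.2, hu] at hpos

lemma inParent_arc_ne_zero (hx : x ∈ CRYC n) {e : EdgeC n} (he : x e ≠ 0)
    (hroot : 0 < rootC n e u) (hw : w ∈ ancestors (inParent x) u) (h : inParent x w < w) :
    x (negEdge (inParent x w) w h) ≠ 0 := by
  induction u using WellFoundedLT.induction generalizing e with
  | _ u ih =>
    rcases eq_or_ne u 0 with rfl | hu
    · rw [ancestors_zero, Finset.mem_singleton] at hw
      subst hw
      exact absurd h (Fin.not_lt_zero _)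
    obtain ⟨hlt, hne⟩ := inParent_spec (exists_negEdge_ne_zero hx hu he hroot)
    rw [ancestors_of_lt hlt, Finset.mem_insert] at hw
    rcases hw with rfl | hw
    · exact hne
    · exact ih _ hlt hne (by simp [rootC_negEdge, hlt.ne]) hw

lemma exists_topEdge_ne_zero (hx : x ∈ CRYC n) : ∃ i j, x (topEdge i j) ≠ 0 := by
  by_contra! h
  rw [mem_CRYC] at hx
  -- every root but those of the top edges has coordinate sum zero
  have htotal : ∑ k, netFlow n x k = 0 := by
    simp_rw [netFlow_apply]
    rw [Finset.sum_comm]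
    refine Finset.sum_eq_zero fun e _ => ?_
    rcases edge_cases e with ⟨t, u, htu, rfl⟩ | ⟨i, j, rfl⟩
    · simp [← Finset.mul_sum, rootC_negEdge, Finset.sum_sub_distrib]
    · simp [h i j]
  simp [hx.2] at htotal

end Cover

theorem mem_extremePoints_CRYC_iff {x : EdgeC n → ℝ} :
    x ∈ (CRYC n).extremePoints ℝ ↔ ∃ p, IsParentMap p ∧ ∃ i j, x = treeFlow p i j := by
  refine ⟨fun hx => ?_, fun ⟨p, hp, i, j, hx⟩ => hx ▸ treeFlow_mem_extremePoints hp i j⟩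
  have hmem := hx.1
  rw [CRYC_eq, mem_extremePoints_iff_forall_support_subset] at hx
  obtain ⟨i, j, hij⟩ := exists_topEdge_ne_zero hmem
  refine ⟨inParent x, isParentMap_inParent x, i, j,
    (hx.2 _ (CRYC_eq ▸ treeFlow_mem_CRYC (isParentMap_inParent x)) fun e hxe => ?_).symm⟩
  by_contra hne
  rcases treeFlow_ne_zero hne with rfl | ⟨w, hw | hw, h, rfl⟩
  · exact hij hxe
  · exact inParent_arc_ne_zero hmem hij (rootC_topEdge_pos i j) hw h hxe
  · exact inParent_arc_ne_zero hmem hij (topEdge_comm i j ▸ rootC_topEdge_pos j i) hw h hxe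

section Chains

variable {A B : Finset (Fin (n + 1))}

def AgreeBelow (A B : Finset (Fin (n + 1))) : Prop :=
  ∀ w ∈ A, w ∈ B → ∀ u < w, (u ∈ A ↔ u ∈ B)

/-- Orders the two chains of a vertex: `B` branches off `A` before `A` branches off `B`. -/
def LeavesFirst (B A : Finset (Fin (n + 1))) : Prop :=
  ∀ a ∈ A, a ∉ B → ∃ b ∈ B, b ∉ A ∧ b < a

noncomputable def pairParent (A B : Finset (Fin (n + 1))) (u : Fin (n + 1)) : Fin (n + 1) :=
  ((if u ∈ A then A else B).filter (· < u)).sup id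

noncomputable def pairFlow (A B : Finset (Fin (n + 1))) : EdgeC n → ℝ :=
  treeFlow (pairParent A B) (A.sup id) (B.sup id)

lemma agreeBelow_ancestors (p : Fin (n + 1) → Fin (n + 1)) (i j : Fin (n + 1)) :
    AgreeBelow (ancestors p i) (ancestors p j) := by
  intro w hwi hwj u hu
  have hi := congrArg (u ∈ ·) (ancestors_of_mem hwi)
  have hj := congrArg (u ∈ ·) (ancestors_of_mem hwj)
  simp only [Finset.mem_filter, hu.le, and_true, eq_iff_iff] at hi hj
  rw [← hi, hj]

lemma leavesFirst_or_leavesFirst (A B : Finset (Fin (n + 1))) :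
    LeavesFirst B A ∨ LeavesFirst A B := by
  by_contra! h
  simp only [LeavesFirst, not_forall, not_exists, not_and, not_lt] at h
  obtain ⟨⟨a, ha, haB, hal⟩, ⟨b, hb, hbA, hbl⟩⟩ := h
  exact (hal b hb hbA).not_gt ((hbl a ha haB).lt_of_ne fun hab => haB (hab ▸ hb))

lemma eq_of_leavesFirst (hBA : LeavesFirst B A) (hAB : LeavesFirst A B) : A = B := by
  by_contra hne
  -- the least vertex in exactly one of the chains contradicts both hypotheses
  have hsymm : (A \ B ∪ B \ A).Nonempty := by
    by_contra h
    simp only [Finset.not_nonempty_iff_eq_empty, Finset.union_eq_empty,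
      Finset.sdiff_eq_empty_iff_subset] at h
    exact hne (h.1.antisymm h.2)
  set m := (A \ B ∪ B \ A).min' hsymm
  have hmin : ∀ v ∈ A \ B ∪ B \ A, m ≤ v := fun v hv => Finset.min'_le _ v hv
  rcases Finset.mem_union.1 ((A \ B ∪ B \ A).min'_mem hsymm) with hm | hm
  · obtain ⟨b, hb, hbA, hbm⟩ := hBA m (Finset.mem_sdiff.1 hm).1 (Finset.mem_sdiff.1 hm).2
    exact (hmin b (Finset.mem_union_right _ (Finset.mem_sdiff.2 ⟨hb, hbA⟩))).not_gt hbm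
  · obtain ⟨a, ha, haB, ham⟩ := hAB m (Finset.mem_sdiff.1 hm).1 (Finset.mem_sdiff.1 hm).2
    exact (hmin a (Finset.mem_union_left _ (Finset.mem_sdiff.2 ⟨ha, haB⟩))).not_gt ham

lemma isParentMap_pairParent : IsParentMap (pairParent A B) := fun _ hu =>
  (Finset.sup_lt_iff (bot_lt_iff_ne_bot.2 hu)).2 fun _ hb => (Finset.mem_filter.1 hb).2

lemma ancestors_sup_eq {C : Finset (Fin (n + 1))} {q : Fin (n + 1) → Fin (n + 1)} (hC : 0 ∈ C)
    (hq : ∀ w ∈ C, w ≠ 0 → q w = (C.filter (· < w)).sup id) :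
    ancestors q (C.sup id) = C := by
  obtain ⟨m, hm, hmax⟩ := Finset.exists_mem_eq_sup C ⟨0, hC⟩ id
  rw [ancestors_eq_filter hC hq (hmax ▸ hm),
    Finset.filter_true_of_mem fun v hv => show v ≤ C.sup id from Finset.le_sup (f := id) hv]

lemma ancestors_pairParent (hA : 0 ∈ A) (hB : 0 ∈ B) (hAB : AgreeBelow A B) :
    ancestors (pairParent A B) (A.sup id) = A ∧ ancestors (pairParent A B) (B.sup id) = B := by
  refine ⟨ancestors_sup_eq hA fun w hw _ => by simp [pairParent, hw],
    ancestors_sup_eq hB fun w hw _ => ?_⟩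
  by_cases hwA : w ∈ A
  · simp only [pairParent, hwA, if_true]
    congr 1
    ext u
    simp only [Finset.mem_filter]
    exact and_congr_left fun hu => hAB w hwA hw u hu
  · simp [pairParent, hwA]

lemma chains_eq_of_pairFlow_eq {A' B' : Finset (Fin (n + 1))} (hA : 0 ∈ A) (hB : 0 ∈ B)
    (hAB : AgreeBelow A B) (hA' : 0 ∈ A') (hB' : 0 ∈ B') (hAB' : AgreeBelow A' B')
    (h : pairFlow A B = pairFlow A' B') : A = A' ∧ B = B' ∨ A = B' ∧ B = A' := by
  have := ancestors_eq_of_treeFlow_eq isParentMap_pairParent h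
  rwa [(ancestors_pairParent hA hB hAB).1, (ancestors_pairParent hA hB hAB).2,
    (ancestors_pairParent hA' hB' hAB').1, (ancestors_pairParent hA' hB' hAB').2] at this

end Chains

section Words

variable {g g' : Fin (n + 1) → Fin 3}

def firstChain (g : Fin (n + 1) → Fin 3) : Finset (Fin (n + 1)) :=
  Finset.univ.filter (g · = 1)

def secondChain (g : Fin (n + 1) → Fin 3) : Finset (Fin (n + 1)) :=
  (firstChain g).filter (fun u => ∀ t, g t = 2 → u < t) ∪ Finset.univ.filter (g · = 2)

lemma mem_firstChain {u : Fin (n + 1)} : u ∈ firstChain g ↔ g u = 1 := by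
  simp [firstChain]

lemma mem_secondChain {u : Fin (n + 1)} :
    u ∈ secondChain g ↔ g u = 1 ∧ (∀ t, g t = 2 → u < t) ∨ g u = 2 := by
  simp [secondChain, firstChain]

lemma zero_mem_secondChain (hg : g 0 = 1) : 0 ∈ secondChain g := by
  refine mem_secondChain.2 (Or.inl ⟨hg, fun t ht => Fin.pos_iff_ne_zero.2 ?_⟩)
  rintro rfl
  rw [hg] at ht
  exact absurd ht (by decide)

lemma agreeBelow_chains : AgreeBelow (firstChain g) (secondChain g) := by
  intro w hw hw' u hu
  rw [mem_firstChain] at hw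
  rw [mem_secondChain] at hw'
  have hwt : ∀ t, g t = 2 → w < t := by
    rcases hw' with hw' | hw'
    exacts [hw'.2, absurd (hw.symm.trans hw') (by decide)]
  rw [mem_firstChain, mem_secondChain]
  constructor
  · exact fun hu1 => Or.inl ⟨hu1, fun t ht => hu.trans (hwt t ht)⟩
  · rintro (hu' | hu')
    exacts [hu'.1, absurd (hwt u hu') hu.not_gt]

lemma leavesFirst_chains : LeavesFirst (secondChain g) (firstChain g) := by
  intro a ha haB
  rw [mem_firstChain] at ha
  have hnot : ¬ ∀ t, g t = 2 → a < t := fun h => haB (mem_secondChain.2 (Or.inl ⟨ha, h⟩))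
  simp only [not_forall, not_lt] at hnot
  obtain ⟨t, ht, hta⟩ := hnot
  refine ⟨t, mem_secondChain.2 (Or.inr ht), fun htA => ?_, hta.lt_of_ne ?_⟩
  · rw [mem_firstChain] at htA
    exact absurd (htA.symm.trans ht) (by decide)
  · rintro rfl
    exact absurd (ha.symm.trans ht) (by decide)

lemma eq_of_chains_eq (h1 : firstChain g = firstChain g') (h2 : secondChain g = secondChain g') :
    g = g' := by
  have hlabel : ∀ g : Fin (n + 1) → Fin 3, ∀ u, g u = if u ∈ firstChain g then 1
      else if u ∈ secondChain g then 2 else 0 := by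
    intro g u
    simp only [mem_firstChain, mem_secondChain]
    rcases (by decide : ∀ a : Fin 3, a = 0 ∨ a = 1 ∨ a = 2) (g u) with h | h | h <;> simp [h]
  ext u : 1
  rw [hlabel g, hlabel g', h1, h2]

lemma exists_chains_eq {A B : Finset (Fin (n + 1))} (hA : 0 ∈ A) (hAB : AgreeBelow A B)
    (hBA : LeavesFirst B A) : ∃ g : Fin (n + 1) → Fin 3,
      g 0 = 1 ∧ firstChain g = A ∧ secondChain g = B := by
  set g : Fin (n + 1) → Fin 3 := fun u => if u ∈ A then 1 else if u ∈ B then 2 else 0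
  have hg1 : ∀ u, g u = 1 ↔ u ∈ A := fun u => by
    simp only [g]; split_ifs <;> simp_all
  have hg2 : ∀ u, g u = 2 ↔ u ∈ B ∧ u ∉ A := fun u => by
    simp only [g]; split_ifs <;> simp_all
  refine ⟨g, (hg1 0).2 hA, Finset.ext fun u => by rw [mem_firstChain, hg1],
    Finset.ext fun u => ?_⟩
  simp only [mem_secondChain, hg1, hg2]
  constructor
  · rintro (⟨huA, hbelow⟩ | ⟨huB, -⟩)
    · by_contra huB
      obtain ⟨b, hb, hbA, hbu⟩ := hBA u huA huB
      exact (hbelow b ⟨hb, hbA⟩).not_gt hbu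
    · exact huB
  · intro huB
    by_cases huA : u ∈ A
    · refine Or.inl ⟨huA, fun t ⟨htB, htA⟩ => lt_of_not_ge fun htu => htA ?_⟩
      exact (hAB u huA huB t (htu.lt_of_ne fun h => htA (h ▸ huA))).2 htB
    · exact Or.inr ⟨huB, huA⟩

end Words

noncomputable def decode (h : Fin n → Fin 3) : EdgeC n → ℝ :=
  pairFlow (firstChain (Fin.cons 1 h)) (secondChain (Fin.cons 1 h))

lemma decode_injective : Function.Injective (decode (n := n)) := by
  intro h h' hdec
  have hg : (Fin.cons 1 h : Fin (n + 1) → Fin 3) 0 = 1 := rfl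
  have hg' : (Fin.cons 1 h' : Fin (n + 1) → Fin 3) 0 = 1 := rfl
  obtain ⟨h1, h2⟩ : firstChain (Fin.cons 1 h) = firstChain (Fin.cons 1 h') ∧
      secondChain (Fin.cons 1 h) = secondChain (Fin.cons 1 h') := by
    rcases chains_eq_of_pairFlow_eq (mem_firstChain.2 hg) (zero_mem_secondChain hg)
      agreeBelow_chains (mem_firstChain.2 hg') (zero_mem_secondChain hg') agreeBelow_chains hdec
      with hc | ⟨h1, h2⟩
    · exact hc
    -- for a swapped pair each chain would leave the other first
    · have := eq_of_leavesFirst leavesFirst_chains (h1 ▸ h2 ▸ leavesFirst_chains)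
      exact ⟨h1.trans this.symm, h2.trans this⟩
  exact Fin.cons_right_injective _ (eq_of_chains_eq h1 h2)

lemma exists_decode_eq {p : Fin (n + 1) → Fin (n + 1)} (hp : IsParentMap p) (i j : Fin (n + 1)) :
    ∃ h, decode h = treeFlow p i j := by
  wlog hlf : LeavesFirst (ancestors p j) (ancestors p i) generalizing i j
  · rw [treeFlow_comm]
    exact this j i ((leavesFirst_or_leavesFirst _ _).resolve_left hlf)
  obtain ⟨g, hg0, hA, hB⟩ :=
    exists_chains_eq (zero_mem_ancestors hp) (agreeBelow_ancestors p i j) hlf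
  refine ⟨Fin.tail g, ?_⟩
  rw [decode, ← hg0, Fin.cons_self_tail, hA, hB, pairFlow, sup_ancestors, sup_ancestors]
  refine treeFlow_congr fun w hw hw0 => ?_
  unfold pairParent
  split_ifs with hwi
  · exact (parent_eq_sup hp hwi hw0).symm
  · exact (parent_eq_sup hp ((Finset.mem_union.1 hw).resolve_left hwi) hw0).symm

theorem range_decode : Set.range (decode (n := n)) = (CRYC n).extremePoints ℝ := by
  ext x
  rw [mem_extremePoints_CRYC_iff]
  constructor
  · rintro ⟨h, rfl⟩
    exact ⟨_, isParentMap_pairParent, _, _, rfl⟩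
  · rintro ⟨p, hp, i, j, rfl⟩
    exact exists_decode_eq hp i j

end CRYC

theorem stmt7_general (n : ℕ) :
    ((CRYC n).extremePoints ℝ).ncard = 3 ^ n := by
  rw [← CRYC.range_decode, Set.ncard_range_of_injective CRYC.decode_injective,
    Nat.card_eq_fintype_card, Fintype.card_fun, Fintype.card_fin, Fintype.card_fin]

/-- `CRYC_{n+1}` has exactly `3^n` vertices. -/
theorem stmt7 (n : ℕ) (hn : 1 ≤ n) :
    ((CRYC n).extremePoints ℝ).ncard = 3 ^ n :=
  stmt7_general n
end
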